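/- Let G be a finite group, N ⊴ G a normal subgroup, and ψ a linear character of N that extends to a linear character ψ̃ of G. Then the map χ ↦ χ ⊗ ψ̃ gives a bijection between the irreducible representations of G/N (inflated to G) and the irreducible representations of G lying above ψ, i.e. Irr(G | ψ) = { (inflation of χ) ⊗ ψ̃ : χ ∈ Irr(G/N) }; in particular the dimensions occurring in Irr(G | ψ) coincide with those in Irr(G/N). -/
import Mathlib


/-- A representation (as a monoid hom into linear endomorphisms) is irreducible if the
only invariant submodules are `⊥` and `⊤`. -/
def IsIrreducibleRep {G V : Type*} [Group G] [AddCommGroup V] [Module ℂ V]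
    (ρ : G →* (V →ₗ[ℂ] V)) : Prop :=
  ∀ p : Submodule ℂ V, (∀ g : G, ∀ v ∈ p, ρ g v ∈ p) → p = ⊥ ∨ p = ⊤

theorem clifford_above_extendable_linear_character
    (G : Type*) [Group G] [Finite G] (N : Subgroup G) [N.Normal]
    (ψ : N →* ℂˣ) (ψt : G →* ℂˣ) (hext : ∀ n : N, ψt (n : G) = ψ n)
    (V : Type*) [AddCommGroup V] [Module ℂ V] [FiniteDimensional ℂ V] [Nontrivial V]
    (ρ : G →* (V →ₗ[ℂ] V)) (hρ : IsIrreducibleRep ρ) :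
    (∃ v : V, v ≠ 0 ∧ ∀ n : N, ρ (n : G) v = (ψ n : ℂ) • v) ↔
      ∃ σ : G ⧸ N →* (V →ₗ[ℂ] V), IsIrreducibleRep σ ∧
        ∀ g : G, ρ g = (ψt g : ℂ) • σ (QuotientGroup.mk g) := by
  constructor
  · rintro ⟨v, hv, hvN⟩
    -- ψ is G-stable
    have hstable : ∀ (g : G) (n : G) (hn : n ∈ N),
        (ψ ⟨g⁻¹ * n * g, Subgroup.Normal.conj_mem' ‹N.Normal› n hn g⟩ : ℂˣ) = ψ ⟨n, hn⟩ := by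
      intro g n hn
      have h1 := hext ⟨g⁻¹ * n * g, Subgroup.Normal.conj_mem' ‹N.Normal› n hn g⟩
      have h2 := hext ⟨n, hn⟩
      rw [← h1, ← h2]
      simp [map_mul, mul_comm, mul_assoc, mul_left_comm]
    -- the ψ-eigenspace is G-invariant hence all of V
    set W : Submodule ℂ V := ⨅ n : N, Module.End.eigenspace (ρ (n : G)) (ψ n) with hW
    have memW : ∀ w : V, w ∈ W ↔ ∀ n : N, ρ (n : G) w = (ψ n : ℂ) • w := by
      intro w
      simp only [hW, Submodule.mem_iInf, Module.End.mem_eigenspace_iff]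
    have hWinv : ∀ g : G, ∀ w ∈ W, ρ g w ∈ W := by
      intro g w hw
      rw [memW] at hw ⊢
      rintro ⟨n, hn⟩
      have key : (n : G) * g = g * (g⁻¹ * n * g) := by group
      have : ρ ((n : G) * g) w = ρ (g * (g⁻¹ * n * g)) w := by rw [key]
      rw [map_mul, map_mul] at this
      simp only [Module.End.mul_apply] at this
      have hmem : g⁻¹ * n * g ∈ N := Subgroup.Normal.conj_mem' ‹N.Normal› n hn g
      have := this.trans (by
        rw [hw ⟨g⁻¹ * n * g, hmem⟩, map_smul, hstable g n hn])
      simpa using this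
    have hWtop : W = ⊤ := by
      rcases hρ W hWinv with h | h
      · exfalso
        apply hv
        have : v ∈ W := (memW v).mpr hvN
        rw [h] at this
        simpa using this
      · exact h
    have hvall : ∀ (w : V) (n : N), ρ (n : G) w = (ψ n : ℂ) • w := by
      intro w n
      exact (memW w).mp (hWtop ▸ Submodule.mem_top) n
    -- twisted representation
    have hmul : ∀ g h : G,
        (((ψt (g * h))⁻¹ : ℂˣ) : ℂ) • ρ (g * h) =
          ((((ψt g)⁻¹ : ℂˣ) : ℂ) • ρ g) * ((((ψt h)⁻¹ : ℂˣ) : ℂ) • ρ h) := by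
      intro g h
      rw [smul_mul_assoc, mul_smul_comm, smul_smul, ← map_mul, map_mul]
      congr 1
      push_cast
      ring
    set τ : G →* (V →ₗ[ℂ] V) :=
      { toFun := fun g => (((ψt g)⁻¹ : ℂˣ) : ℂ) • ρ g
        map_one' := by simp
        map_mul' := hmul } with hτ
    have hτN : ∀ x ∈ N, τ x = 1 := by
      intro x hx
      ext w
      simp only [hτ, MonoidHom.coe_mk, OneHom.coe_mk, LinearMap.smul_apply]
      rw [hvall w ⟨x, hx⟩, smul_smul, ← hext ⟨x, hx⟩]
      simp
    refine ⟨QuotientGroup.lift N τ hτN, ?_, ?_⟩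
    · intro p hp
      apply hρ p
      intro g w hw
      have h1 : QuotientGroup.lift N τ hτN (QuotientGroup.mk g) w ∈ p :=
        hp (QuotientGroup.mk g) w hw
      have h2 : QuotientGroup.lift N τ hτN (QuotientGroup.mk g) = τ g := rfl
      rw [h2] at h1
      simp only [hτ, MonoidHom.coe_mk, OneHom.coe_mk, LinearMap.smul_apply] at h1
      have := Submodule.smul_mem p ((ψt g : ℂˣ) : ℂ) h1
      rw [smul_smul] at this
      simpa using this
    · intro g
      have h2 : QuotientGroup.lift N τ hτN (QuotientGroup.mk g) = τ g := rfl
      rw [h2]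
      ext w
      simp only [hτ, MonoidHom.coe_mk, OneHom.coe_mk, LinearMap.smul_apply]
      rw [smul_smul]
      simp
  · rintro ⟨σ, -, hσ⟩
    obtain ⟨v, hv⟩ := exists_ne (0 : V)
    refine ⟨v, hv, ?_⟩
    intro n
    have h1 : (QuotientGroup.mk (n : G) : G ⧸ N) = 1 :=
      (QuotientGroup.eq_one_iff _).mpr n.2
    rw [hσ (n : G), h1, map_one, ← hext n]
    simp
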